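/- Let C be a shortest even hole of a graph G, let u and v be distinct vertices of C, let the uv-path P of G be a C-shallow worst C-shortcut, and let C1, C2 be the uv-paths of C with ‖C1‖ ≤ ‖C2‖. Then ‖P‖ = ‖C1‖ − 1. -/

import Mathlib

open SimpleGraph

variable {V : Type*}

/-- The vertex set of a walk. -/
def suppSet {G : SimpleGraph V} {u v : V} (w : G.Walk u v) : Set V :=
  {x | x ∈ w.support}

/-- An induced cycle of `G`. -/
def IsInducedCycle (G : SimpleGraph V) {r : V} (w : G.Walk r r) : Prop :=
  w.IsCycle ∧ ∀ a b : V, a ∈ w.support → b ∈ w.support → G.Adj a b → s(a, b) ∈ w.edges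

/-- A hole of `G`: an induced cycle with at least 4 vertices. -/
def IsHole (G : SimpleGraph V) {r : V} (w : G.Walk r r) : Prop :=
  IsInducedCycle G w ∧ 4 ≤ w.length

/-- An even hole of `G`. -/
def IsEvenHole (G : SimpleGraph V) {r : V} (w : G.Walk r r) : Prop :=
  IsHole G w ∧ Even w.length

/-- A shortest even hole of `G`. -/
def IsShortestEvenHole (G : SimpleGraph V) {r : V} (w : G.Walk r r) : Prop :=
  IsEvenHole G w ∧ ∀ (y : V) (w' : G.Walk y y), IsEvenHole G w' → w.length ≤ w'.length

/-- `P` is a path of `G` all of whose edges lie on the walk `c`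
(used for "a `uv`-path of `C`"). -/
def IsPathOf (G : SimpleGraph V) {p q u v : V} (c : G.Walk p q) (P : G.Walk u v) : Prop :=
  P.IsPath ∧ ∀ e ∈ P.edges, e ∈ c.edges

/-- The distance `d_C(u,v)` between `u` and `v` within the cycle `c`. -/
noncomputable def cycleDist (G : SimpleGraph V) {r : V} (c : G.Walk r r) (u v : V) : ℕ :=
  sInf {n | ∃ P : G.Walk u v, IsPathOf G c P ∧ P.length = n}

/-- The induced subgraph `G[S]` is a hole of `G`. -/
def IsHoleOn (G : SimpleGraph V) (S : Set V) : Prop :=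
  ∃ (r : V) (w : G.Walk r r), IsHole G w ∧ suppSet w = S

/-- The induced subgraph `G[S]` is an even hole of `G`. -/
def IsEvenHoleOn (G : SimpleGraph V) (S : Set V) : Prop :=
  ∃ (r : V) (w : G.Walk r r), IsEvenHole G w ∧ suppSet w = S

/-- The induced subgraph `G[S]` is a shortest even hole of `G`. -/
def IsShortestEvenHoleOn (G : SimpleGraph V) (S : Set V) : Prop :=
  ∃ (r : V) (w : G.Walk r r), IsShortestEvenHole G w ∧ suppSet w = S

/-- `P` is `C`-good: the union of `P` and one of the two `uv`-paths of `C`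
is again a shortest even hole of `G`. -/
def CGood (G : SimpleGraph V) {r u v : V} (c : G.Walk r r) (P : G.Walk u v) : Prop :=
  ∃ Q : G.Walk u v, IsPathOf G c Q ∧ IsShortestEvenHoleOn G (suppSet P ∪ suppSet Q)

/-- The standing assumptions for `C`-shortcuts: `P` is a `uv`-path of `G` for distinct
nonadjacent vertices `u`, `v` of `C`. -/
def ShortcutSetup (G : SimpleGraph V) {r u v : V} (c : G.Walk r r) (P : G.Walk u v) : Prop :=
  P.IsPath ∧ u ≠ v ∧ ¬G.Adj u v ∧ u ∈ c.support ∧ v ∈ c.support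

/-- `P` is a `C`-shortcut: `2 ≤ ‖P‖ ≤ d_C(u,v)` and `‖P‖ < ‖C‖/4`. -/
def CShortcut (G : SimpleGraph V) {r u v : V} (c : G.Walk r r) (P : G.Walk u v) : Prop :=
  2 ≤ P.length ∧ P.length ≤ cycleDist G c u v ∧ 4 * P.length < c.length

/-- `C1` and `C2` are the two `uv`-paths of the cycle `c`. -/
def ArcPair (G : SimpleGraph V) {r u v : V} (c : G.Walk r r) (C1 C2 : G.Walk u v) : Prop :=
  IsPathOf G c C1 ∧ IsPathOf G c C2 ∧ C1.length + C2.length = c.length ∧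
    ∀ e ∈ c.edges, e ∈ C1.edges ∨ e ∈ C2.edges

/-- `P` is `C`-shallow: `‖P‖ ≥ d_C(u,v) − 1` and `G[P ∪ C2]` is a hole, where `C2` is the
longer of the two `uv`-paths of `C`. -/
def CShallow (G : SimpleGraph V) {r u v : V} (c : G.Walk r r) (P : G.Walk u v) : Prop :=
  cycleDist G c u v - 1 ≤ P.length ∧
    ∀ C1 C2 : G.Walk u v, ArcPair G c C1 C2 → C1.length ≤ C2.length →
      IsHoleOn G (suppSet P ∪ suppSet C2)

/-- `P` is a worst `C`-shortcut. -/
def WorstCShortcut (G : SimpleGraph V) {r u v : V} (c : G.Walk r r) (P : G.Walk u v) : Prop :=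
  ShortcutSetup G c P ∧ CShortcut G c P ∧ ¬CGood G c P ∧
    ∀ (u' v' : V) (P' : G.Walk u' v'),
      ShortcutSetup G c P' → CShortcut G c P' → ¬CGood G c P' →
        (P.length < P'.length ∨
          (P.length = P'.length ∧ cycleDist G c u' v' ≤ cycleDist G c u v))

/-- `C` is good in `G`: every `C`-shortcut is `C`-good. -/
def GoodHole (G : SimpleGraph V) {r : V} (c : G.Walk r r) : Prop :=
  ∀ (u v : V) (P : G.Walk u v), ShortcutSetup G c P → CShortcut G c P → CGood G c P

/-- `P` is a shortest `uv`-path of `G`. -/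
def IsShortestPath (G : SimpleGraph V) {u v : V} (P : G.Walk u v) : Prop :=
  P.IsPath ∧ ∀ Q : G.Walk u v, P.length ≤ Q.length

/-- The closed neighborhood `N_G[S]` of a vertex set `S`. -/
def closedNbhd (G : SimpleGraph V) (S : Set V) : Set V :=
  S ∪ {x | ∃ y ∈ S, G.Adj y x}

/-- The subgraph of `G` induced on `S` (kept on the same vertex type: edges of `G`
with both ends in `S`). -/
def restrictTo (G : SimpleGraph V) (S : Set V) : SimpleGraph V where
  Adj a b := G.Adj a b ∧ a ∈ S ∧ b ∈ S
  symm := ⟨fun a b h => ⟨h.1.symm, h.2.2, h.2.1⟩⟩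
  loopless := ⟨fun a h => G.loopless.1 a h.1⟩

/-- The vertex set of `H(u,v,x,y) = G[(V(G) \ N_G[V(P_uv ∪ P_xy) \ {u,v}]) ∪ {u,v}]`. -/
def Hverts (G : SimpleGraph V) {u v a b : V} (Puv : G.Walk u v) (Pxy : G.Walk a b) : Set V :=
  (Set.univ \ closedNbhd G ((suppSet Puv ∪ suppSet Pxy) \ {u, v})) ∪ {u, v}

/-- The graph `H(u,v,x,y)`. -/
def Hgraph (G : SimpleGraph V) {u v a b : V} (Puv : G.Walk u v) (Pxy : G.Walk a b) :
    SimpleGraph V :=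
  restrictTo G (Hverts G Puv Pxy)

/-- `G` is shallow. -/
def ShallowGraph (G : SimpleGraph V) : Prop :=
  ∃ (r : V) (c : G.Walk r r), IsShortestEvenHole G c ∧
    ∀ (u v : V) (P : G.Walk u v), WorstCShortcut G c P → CShallow G c P

/-- `G` is anti-shallow. -/
def AntiShallowGraph (G : SimpleGraph V) : Prop :=
  ∀ (r : V) (c : G.Walk r r), IsShortestEvenHole G c → ¬GoodHole G c →
    ∀ (u v : V) (P : G.Walk u v), WorstCShortcut G c P → ¬CShallow G c P

/-- The induced subgraph `G[S]` is a path with end-vertices `u` and `v`. -/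
def IsInducedPathOn (G : SimpleGraph V) (u v : V) (S : Set V) : Prop :=
  ∃ Q : G.Walk u v, Q.IsPath ∧ suppSet Q = S ∧
    ∀ a b : V, a ∈ S → b ∈ S → G.Adj a b → s(a, b) ∈ Q.edges


/-! A path of a cycle starting at `u` runs along one of the two directions of the cycle, so it is
an initial segment of one of the two `u`-rooted traversals; two `uv`-paths of a cycle therefore
either have equal length or are complementary arcs. Applied to `C` this gives `d_C(u,v) = ‖C1‖`,
and applied to the hole on `P ∪ C2` it gives `‖P‖ + ‖C2‖` as its length (equal lengths would force
`4‖P‖ < ‖C‖ ≤ 2‖P‖`). If `‖P‖ = ‖C1‖`, that hole would be as long as `C`, hence a shortest even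
hole, and `P` would be `C`-good. So `‖C1‖ - 1 ≤ ‖P‖ < ‖C1‖`. -/

namespace SimpleGraph.Walk

variable {G : SimpleGraph V}

lemma IsPath.takeUntil_end [DecidableEq V] {u v : V} {p : G.Walk u v} (hp : p.IsPath)
    (h : v ∈ p.support) : p.takeUntil v h = p := by
  have hnil : p.dropUntil v h = Walk.nil := (isPath_iff_nil.mp (hp.dropUntil h)).eq_nil
  conv_rhs => rw [← take_spec p h, hnil, append_nil]

lemma IsPath.length_takeUntil_add_length_takeUntil_reverse [DecidableEq V] {u v w : V}
    {p : G.Walk u v} (hp : p.IsPath) (hw : w ∈ p.support) (hw' : w ∈ p.reverse.support) :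
    (p.takeUntil w hw).length + (p.reverse.takeUntil w hw').length = p.length := by
  have hrev : p.reverse.takeUntil w hw' = (p.dropUntil w hw).reverse := by
    have h := takeUntil_append_of_mem_left (p.dropUntil w hw).reverse
      (p.takeUntil w hw).reverse (end_mem_support _)
    rw [(hp.dropUntil hw).reverse.takeUntil_end] at h
    simpa only [← reverse_append, take_spec] using h
  conv_rhs => rw [← take_spec p hw]
  rw [hrev, length_reverse, length_append]

lemma edges_subset_of_cons_edges_subset_cons {u v x y t : V} {h : G.Adj u x} {Q : G.Walk x v}
    {h' : G.Adj u y} {W : G.Walk y t} (hu : u ∉ Q.support)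
    (hsub : (cons h Q).edges ⊆ (cons h' W).edges) : Q.edges ⊆ W.edges := fun e he => by
  rcases List.mem_cons.mp (hsub (List.mem_cons_of_mem _ he)) with rfl | he'
  · exact absurd (Q.fst_mem_support_of_mem_edges he) hu
  · exact he'

lemma IsPath.eq_takeUntil_of_edges_subset [DecidableEq V] {u v t : V} {Q : G.Walk u v}
    {W : G.Walk u t} (hQ : Q.IsPath) (hW : W.IsPath) (hsub : Q.edges ⊆ W.edges) :
    ∃ hv : v ∈ W.support, Q = W.takeUntil v hv := by
  induction Q generalizing t with
  | nil => exact ⟨W.start_mem_support, (takeUntil_first W).symm⟩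
  | @cons u x v hadj Q ih =>
    obtain ⟨hQ, hu⟩ := (cons_isPath_iff hadj Q).mp hQ
    cases W with
    | nil => simp at hsub
    | @cons _ y _ hy W =>
      obtain rfl : x = y := by
        simpa using hW.eq_snd_of_mem_edges (hsub (show s(u, x) ∈ _ by simp))
      obtain ⟨hv, rfl⟩ := ih hQ ((cons_isPath_iff hy W).mp hW).1
        (edges_subset_of_cons_edges_subset_cons hu hsub)
      have huv : u ≠ v := fun h => hu (h ▸ (W.takeUntil v hv).end_mem_support)
      exact ⟨List.mem_cons_of_mem _ hv, (takeUntil_cons hv huv hy).symm⟩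

lemma IsCycle.eq_takeUntil_or_eq_cons_takeUntil_of_edges_subset [DecidableEq V] {u v y : V}
    {h : G.Adj u y} {w : G.Walk y u} (hc : (cons h w).IsCycle) {Q : G.Walk u v}
    (hQ : Q.IsPath) (hsub : Q.edges ⊆ (cons h w).edges) :
    (∃ hv, Q = w.reverse.takeUntil v hv) ∨ ∃ hv, Q = cons h (w.takeUntil v hv) := by
  have hw := ((cons_isCycle_iff w h).mp hc).1
  by_cases hfirst : s(u, y) ∈ Q.edges
  · right
    cases Q with
    | nil => simp at hfirst
    | @cons _ x _ hx Q =>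
      obtain rfl : y = x := by simpa using hQ.eq_snd_of_mem_edges hfirst
      obtain ⟨hQ, hu⟩ := (cons_isPath_iff hx Q).mp hQ
      obtain ⟨hv, rfl⟩ := hQ.eq_takeUntil_of_edges_subset hw
        (edges_subset_of_cons_edges_subset_cons hu hsub)
      exact ⟨hv, rfl⟩
  · left
    refine hQ.eq_takeUntil_of_edges_subset hw.reverse fun e he => ?_
    rcases List.mem_cons.mp (hsub he) with rfl | he'
    · exact absurd he hfirst
    · rwa [edges_reverse, List.mem_reverse]

theorem IsCycle.length_eq_or_add_eq_of_edges_subset {r u v : V} {c : G.Walk r r}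
    (hc : c.IsCycle) (hu : u ∈ c.support) {Q₁ Q₂ : G.Walk u v} (h₁ : Q₁.IsPath)
    (h₂ : Q₂.IsPath) (hs₁ : Q₁.edges ⊆ c.edges) (hs₂ : Q₂.edges ⊆ c.edges) :
    Q₁.length = Q₂.length ∨ Q₁.length + Q₂.length = c.length := by
  classical
  have hmem : ∀ e, e ∈ c.edges → e ∈ (c.rotate u hu).edges :=
    fun e he => (rotate_edges c u hu).perm.mem_iff.mpr he
  have hc' := hc.rotate hu
  rw [← length_rotate c u hu]
  generalize c.rotate u hu = c' at hc' hmem ⊢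
  cases c' with
  | nil => exact absurd hc' not_isCycle_nil
  | cons h w =>
    have hw := ((cons_isCycle_iff w h).mp hc').1
    rcases hc'.eq_takeUntil_or_eq_cons_takeUntil_of_edges_subset h₁
        (fun e he => hmem e (hs₁ he)) with ⟨hv₁, rfl⟩ | ⟨hv₁, rfl⟩ <;>
      rcases hc'.eq_takeUntil_or_eq_cons_takeUntil_of_edges_subset h₂
        (fun e he => hmem e (hs₂ he)) with ⟨hv₂, rfl⟩ | ⟨hv₂, rfl⟩
    · exact Or.inl rfl
    · have := hw.length_takeUntil_add_length_takeUntil_reverse hv₂ hv₁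
      right; simp only [length_cons]; omega
    · have := hw.length_takeUntil_add_length_takeUntil_reverse hv₁ hv₂
      right; simp only [length_cons]; omega
    · exact Or.inl rfl

end SimpleGraph.Walk

variable {G : SimpleGraph V}

lemma IsInducedCycle.edges_subset_of_suppSet_subset {r u v : V} {w : G.Walk r r}
    (hw : IsInducedCycle G w) {Q : G.Walk u v} (hsub : suppSet Q ⊆ suppSet w) :
    Q.edges ⊆ w.edges := by
  intro e he
  induction e using Sym2.ind with
  | _ a b =>
    exact hw.2 a b (hsub (Q.fst_mem_support_of_mem_edges he))
      (hsub (Q.snd_mem_support_of_mem_edges he)) (Q.adj_of_mem_edges he)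

lemma IsInducedCycle.length_eq_or_add_eq_of_suppSet_eq {r u v : V} {w : G.Walk r r}
    (hw : IsInducedCycle G w) {P Q : G.Walk u v} (hP : P.IsPath) (hQ : Q.IsPath)
    (hsupp : suppSet w = suppSet P ∪ suppSet Q) :
    P.length = Q.length ∨ P.length + Q.length = w.length := by
  have hPw : suppSet P ⊆ suppSet w := hsupp ▸ Set.subset_union_left
  have hQw : suppSet Q ⊆ suppSet w := hsupp ▸ Set.subset_union_right
  exact hw.1.length_eq_or_add_eq_of_edges_subset (hPw P.start_mem_support) hP hQ
    (hw.edges_subset_of_suppSet_subset hPw) (hw.edges_subset_of_suppSet_subset hQw)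

lemma cycleDist_eq_length_of_arcPair {r u v : V} {c : G.Walk r r} (hc : c.IsCycle)
    (hu : u ∈ c.support) {C₁ C₂ : G.Walk u v} (harc : ArcPair G c C₁ C₂)
    (hle : C₁.length ≤ C₂.length) : cycleDist G c u v = C₁.length := by
  obtain ⟨hC₁, -, hsum, -⟩ := harc
  have hdist : cycleDist G c u v ≤ C₁.length := Nat.sInf_le ⟨C₁, hC₁, rfl⟩
  obtain ⟨Q, hQ, hQlen⟩ := Nat.sInf_mem (⟨C₁.length, C₁, hC₁, rfl⟩ :
    {n | ∃ Q : G.Walk u v, IsPathOf G c Q ∧ Q.length = n}.Nonempty)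
  have := hc.length_eq_or_add_eq_of_edges_subset hu hQ.1 hC₁.1 hQ.2 hC₁.2
  rw [cycleDist] at hdist ⊢
  omega

lemma IsShortestEvenHole.of_length_eq {r r' : V} {c : G.Walk r r} {w : G.Walk r' r'}
    (hc : IsShortestEvenHole G c) (hw : IsHole G w) (hlen : w.length = c.length) :
    IsShortestEvenHole G w :=
  ⟨⟨hw, hlen ▸ hc.1.2⟩, fun _ w' hw' => hlen ▸ hc.2 _ w' hw'⟩

theorem stmt6 (G : SimpleGraph V) {r u v : V} (c : G.Walk r r)
    (hC : IsShortestEvenHole G c) (P : G.Walk u v)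
    (hworst : WorstCShortcut G c P) (hshallow : CShallow G c P)
    (C1 C2 : G.Walk u v) (harc : ArcPair G c C1 C2) (hle : C1.length ≤ C2.length) :
    P.length + 1 = C1.length := by
  obtain ⟨⟨hP, -, -, hu, -⟩, ⟨-, hPdist, hPshort⟩, hbad, -⟩ := hworst
  obtain ⟨hPlow, hhole⟩ := hshallow
  have hsum : C1.length + C2.length = c.length := harc.2.2.1
  have hdist := cycleDist_eq_length_of_arcPair hC.1.1.1.1 hu harc hle
  obtain ⟨r', w, hw, hwsupp⟩ := hhole C1 C2 harc hle
  have hPC₂ : P.length + C2.length = w.length :=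
    (hw.1.length_eq_or_add_eq_of_suppSet_eq hP harc.2.1.1 hwsupp).resolve_left (by omega)
  have hPC₁ : P.length ≠ C1.length := fun h =>
    hbad ⟨C2, harc.2.1, r', w, hC.of_length_eq hw (by omega), hwsupp⟩
  omega
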